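/- Let R be a ring and V a cochain complex of R-modules equipped with a decreasing filtration by subcomplexes V = F₀V ⊇ F₁V ⊇ F₂V ⊇ ⋯ which is Hausdorff (⋂_i F_iV = 0). Assume that for each i ≥ 0 the quotient complex Gr_iV = F_iV/F_{i+1}V is K-injective, that for each i the inclusion F_{i+1}V ⊆ F_iV splits in every degree, i.e. F_iV ≅ F_{i+1}V ⊕ Gr_iV as graded R-modules, and that for every k ∈ ℤ there are only finitely many i with Gr_i^kV ≠ 0. Then V is K-injective. -/

import Mathlib

/-!
Given `f : Z ⟶ V` with `Z` acyclic, we build maps `gₙ : Z ⟶ FₙV` with `g₀ = f` inductively: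
`gₙ` composed with `FₙV ⟶ GrₙV` is null-homotopic because `GrₙV` is K-injective, and the
homotopy lifts along the degreewise split epimorphism `FₙV ⟶ GrₙV`; subtracting the induced
null-homotopic map leaves a map killed by `FₙV ⟶ GrₙV`, i.e. one factoring through `Fₙ₊₁V`.
In a fixed degree only finitely many of these homotopies are nonzero, so their sum `H` is a
homotopy, and in each degree `f - (dH + Hd)` agrees with `gₙ` (viewed in `V`) for all large
`n`. Its image therefore lies in every `FₙV`, hence vanishes by the Hausdorff condition.
-/

open CategoryTheory Limits

/-- A cochain complex of `R`-modules is K-injective if every morphism from an acyclic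
complex to it is homotopic to zero. -/
def KInjective {R : Type*} [Ring R] (P : CochainComplex (ModuleCat R) ℤ) : Prop :=
  ∀ Z : CochainComplex (ModuleCat R) ℤ, (∀ i : ℤ, Z.ExactAt i) →
    ∀ f : Z ⟶ P, Nonempty (Homotopy f 0)

open HomologicalComplex

section

variable {C : Type*} [Category C] {ι : Type*} {c : ComplexShape ι}

lemma Homotopy.eq_nullHomotopicMap' [Preadditive C] {Z V : HomologicalComplex C c} {f : Z ⟶ V}
    (H : Homotopy f 0) : f = Homotopy.nullHomotopicMap' fun i j _ => H.hom i j := by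
  ext k
  rw [H.comm k, zero_f, add_zero]
  dsimp only [Homotopy.nullHomotopicMap', Homotopy.nullHomotopicMap]
  congr 2 <;> funext i j <;> split_ifs with hij
  exacts [rfl, H.zero i j hij, rfl, H.zero i j hij]

lemma HomologicalComplex.f_zero_eq_add_sum_nullHomotopicMap'_f [Preadditive C]
    {Z V : HomologicalComplex C c} (φ : ℕ → (Z ⟶ V)) (h : ℕ → ∀ a b, c.Rel b a → (Z.X a ⟶ V.X b))
    (hφ : ∀ n, φ n = φ (n + 1) + Homotopy.nullHomotopicMap' (h n)) (k : ι) (n : ℕ) :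
    (φ 0).f k = (φ n).f k + ∑ i ∈ Finset.range n, (Homotopy.nullHomotopicMap' (h i)).f k := by
  induction n with
  | zero => simp
  | succ n ih => rw [ih, hφ n, add_f_apply, Finset.sum_range_succ]; abel

lemma HomologicalComplex.exists_comp_cokernel_π_f_eq_id [Abelian C] {A B : HomologicalComplex C c}
    (φ : A ⟶ B) {k : ι} {r : B.X k ⟶ A.X k} (hr : φ.f k ≫ r = 𝟙 _) :
    ∃ σ : (cokernel φ).X k ⟶ B.X k, σ ≫ (cokernel.π φ).f k = 𝟙 _ := by
  have hS := (ShortComplex.cokernelSequence_exact φ).map (eval C c k)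
  let s := ShortComplex.Splitting.ofExactOfRetraction _ hS r hr
    ((eval C c k).map_epi (cokernel.π φ))
  exact ⟨s.s, s.s_g⟩

lemma HomologicalComplex.exists_eq_comp_add_nullHomotopicMap' [Abelian C]
    {Z A B : HomologicalComplex C c} (φ : A ⟶ B) [Mono φ] (σ : ∀ k, (cokernel φ).X k ⟶ B.X k)
    (hσ : ∀ k, σ k ≫ (cokernel.π φ).f k = 𝟙 _) {g : Z ⟶ B} (H : Homotopy (g ≫ cokernel.π φ) 0) :
    ∃ g' : Z ⟶ A, g = g' ≫ φ + Homotopy.nullHomotopicMap' fun a b _ => H.hom a b ≫ σ b := by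
  set u := g - Homotopy.nullHomotopicMap' fun a b _ => H.hom a b ≫ σ b
  have hu : u ≫ cokernel.π φ = 0 := by
    simp only [u, Preadditive.sub_comp, Homotopy.nullHomotopicMap'_comp, Category.assoc, hσ,
      Category.comp_id, ← H.eq_nullHomotopicMap', sub_self]
  refine ⟨Abelian.monoLift φ u hu, ?_⟩
  rw [Abelian.monoLift_comp, sub_add_cancel]

end

lemma ModuleCat.hom_eq_zero_of_range_le {R : Type*} [Ring R] {M N : ModuleCat R} {ι : Type*}
    {p : ι → Submodule R N} (hp : ⨅ i, p i = ⊥) {ψ : M ⟶ N}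
    (hψ : ∀ i, LinearMap.range ψ.hom ≤ p i) : ψ = 0 :=
  ModuleCat.hom_ext (LinearMap.range_eq_bot.mp (eq_bot_iff.mpr (hp ▸ le_iInf hψ)))

namespace CochainComplex

section Preadditive

variable {C : Type*} [Category C] [Preadditive C] {Z V : CochainComplex C ℤ}

lemma nullHomotopicMap'_f (h : ∀ a b, (ComplexShape.up ℤ).Rel b a → (Z.X a ⟶ V.X b)) (k : ℤ) :
    (Homotopy.nullHomotopicMap' h).f k =
      Z.d k (k + 1) ≫ h (k + 1) k (by simp) + h k (k - 1) (by simp) ≫ V.d (k - 1) k :=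
  Homotopy.nullHomotopicMap'_f (by simp) (by simp) h

lemma sum_nullHomotopicMap'_f_eq (h : ℕ → ∀ a b, (ComplexShape.up ℤ).Rel b a → (Z.X a ⟶ V.X b))
    {N : ℤ → ℕ} (hN : ∀ n a b hab, N b ≤ n → h n a b hab = 0) {k : ℤ} {n : ℕ} (hk : N k ≤ n)
    (hk' : N (k - 1) ≤ n) :
    ∑ i ∈ Finset.range n, (Homotopy.nullHomotopicMap' (h i)).f k =
      (Homotopy.nullHomotopicMap' fun a b hab => ∑ i ∈ Finset.range (N b), h i a b hab).f k := by
  simp only [nullHomotopicMap'_f, Finset.sum_add_distrib, Preadditive.comp_sum,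
    Preadditive.sum_comp]
  rw [Finset.eventually_constant_sum (fun i hi => by rw [hN i _ _ _ hi, comp_zero]) hk,
    Finset.eventually_constant_sum (fun i hi => by rw [hN i _ _ _ hi, zero_comp]) hk']

end Preadditive

lemma nonempty_homotopy_zero_of_telescoping {R : Type*} [Ring R]
    {Z V : CochainComplex (ModuleCat R) ℤ} (φ : ℕ → (Z ⟶ V))
    (h : ℕ → ∀ a b, (ComplexShape.up ℤ).Rel b a → (Z.X a ⟶ V.X b))
    (hφ : ∀ n, φ n = φ (n + 1) + Homotopy.nullHomotopicMap' (h n))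
    (hh : ∀ b, ∃ N, ∀ n, N ≤ n → ∀ a hab, h n a b hab = 0)
    (p : ℕ → ∀ k, Submodule R (V.X k)) (hp : ∀ k, Antitone (p · k))
    (hsep : ∀ k, ⨅ n, p n k = ⊥) (hφp : ∀ n k, LinearMap.range ((φ n).f k).hom ≤ p n k) :
    Nonempty (Homotopy (φ 0) 0) := by
  choose N hN using hh
  set H := fun a b hab => ∑ i ∈ Finset.range (N b), h i a b hab
  suffices φ 0 = Homotopy.nullHomotopicMap' H from
    ⟨(Homotopy.ofEq this).trans (Homotopy.nullHomotopy' H)⟩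
  ext k : 1
  have hlim : ∀ n, max (N k) (N (k - 1)) ≤ n →
      (φ 0).f k - (Homotopy.nullHomotopicMap' H).f k = (φ n).f k := fun n hn => by
    rw [f_zero_eq_add_sum_nullHomotopicMap'_f φ h hφ k n,
      sum_nullHomotopicMap'_f_eq h (fun n a b hab hb => hN b n hb a hab)
        (le_of_max_le_left hn) (le_of_max_le_right hn), add_sub_cancel_right]
  rw [← sub_eq_zero]
  refine ModuleCat.hom_eq_zero_of_range_le (hsep k) fun m => ?_
  rw [hlim _ (le_max_right m _)]
  exact (hφp _ k).trans (hp k (le_max_left _ _))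

end CochainComplex

lemma antitone_range_f {R : Type*} [Ring R] {V : CochainComplex (ModuleCat R) ℤ}
    {F : ℕ → CochainComplex (ModuleCat R) ℤ} {ι : ∀ i : ℕ, F (i + 1) ⟶ F i}
    {j : ∀ i : ℕ, F i ⟶ V} (hcomm : ∀ i : ℕ, ι i ≫ j i = j (i + 1)) (k : ℤ) :
    Antitone fun n => LinearMap.range ((j n).f k).hom :=
  antitone_nat_of_succ_le fun n => by
    rw [← hcomm n, comp_f, ModuleCat.hom_comp]
    exact LinearMap.range_comp_le_range _ _

theorem K_injective_of_filtration_general {R : Type*} [Ring R]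
    (V : CochainComplex (ModuleCat R) ℤ)
    -- the filtration, given as a decreasing chain of subcomplexes of `V`:
    (F : ℕ → CochainComplex (ModuleCat R) ℤ)
    (ι : ∀ i : ℕ, F (i + 1) ⟶ F i)
    (j : ∀ i : ℕ, F i ⟶ V)
    (hcomm : ∀ i : ℕ, ι i ≫ j i = j (i + 1))
    -- `F₀V = V`:
    (htop : IsIso (j 0))
    -- the filtration is Hausdorff:
    (hHausdorff : ∀ k : ℤ, (⨅ i : ℕ, LinearMap.range ((j i).f k).hom) = ⊥)
    -- the inclusions split in every degree (as graded modules `F_iV ≅ F_{i+1}V ⊕ Gr_iV`):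
    (hsplit : ∀ (i : ℕ) (k : ℤ), ∃ r : (F i).X k ⟶ (F (i + 1)).X k, (ι i).f k ≫ r = 𝟙 ((F (i + 1)).X k))
    -- the graded pieces `Gr_iV = F_iV / F_{i+1}V` are K-injective:
    (hGr : ∀ i : ℕ, KInjective (cokernel (ι i)))
    -- in each degree `k`, only finitely many graded pieces are nonzero:
    (hfin : ∀ k : ℤ, {i : ℕ | ¬ IsZero ((cokernel (ι i)).X k)}.Finite) :
    KInjective V := by
  intro Z hZ f
  have hι : ∀ n, Mono (ι n) := fun n => mono_of_mono_f _ fun k =>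
    (hsplit n k).elim fun r hr => (SplitMono.mk r hr).mono
  choose σ hσ using fun n k => (hsplit n k).elim fun _ hr => exists_comp_cokernel_π_f_eq_id (ι n) hr
  let H (n : ℕ) (g : Z ⟶ F n) : Homotopy (g ≫ cokernel.π (ι n)) 0 := (hGr n Z hZ _).some
  choose next hnext using fun n g => exists_eq_comp_add_nullHomotopicMap' (ι n) (σ n) (hσ n) (H n g)
  let g (n : ℕ) : Z ⟶ F n := Nat.rec (f ≫ inv (j 0)) (fun n gn => next n gn) n
  have hg₀ : g 0 ≫ j 0 = f := by simp [g]
  rw [← hg₀]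
  refine CochainComplex.nonempty_homotopy_zero_of_telescoping (fun n => g n ≫ j n)
    (fun n a b _ => (H n (g n)).hom a b ≫ σ n b ≫ (j n).f b) (fun n => ?_) (fun b => ?_)
    (fun n k => LinearMap.range ((j n).f k).hom) (antitone_range_f hcomm) hHausdorff
    (fun n k => ?_)
  · conv_lhs => rw [hnext n (g n)]
    simp only [Preadditive.add_comp, Homotopy.nullHomotopicMap'_comp, Category.assoc, hcomm]
    rfl
  · obtain ⟨N, hN⟩ := (hfin b).bddAbove
    refine ⟨N + 1, fun n hn a _ => ?_⟩
    have hzero : IsZero ((cokernel (ι n)).X b) := not_not.mp fun h => by have := hN h; omega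
    rw [hzero.eq_of_tgt ((H n (g n)).hom a b) 0, zero_comp]
  · rw [comp_f, ModuleCat.hom_comp]
    exact LinearMap.range_comp_le_range _ _

/-- Proposition 1.3': a cochain complex with a Hausdorff decreasing filtration
`V = F₀V ⊇ F₁V ⊇ ⋯` by subcomplexes, which splits degreewise, whose graded pieces
`Gr_iV = F_iV/F_{i+1}V` are K-injective, and such that for every degree `k` only finitely
many graded pieces are nonzero in degree `k`, is itself K-injective. -/
theorem K_injective_of_filtration {R : Type*} [Ring R]
    (V : CochainComplex (ModuleCat R) ℤ)
    -- the filtration, given as a decreasing chain of subcomplexes of `V`: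
    (F : ℕ → CochainComplex (ModuleCat R) ℤ)
    (ι : ∀ i : ℕ, F (i + 1) ⟶ F i)
    (j : ∀ i : ℕ, F i ⟶ V)
    (hcomm : ∀ i : ℕ, ι i ≫ j i = j (i + 1))
    (hmono : ∀ i : ℕ, Mono (j i))
    -- `F₀V = V`:
    (htop : IsIso (j 0))
    -- the filtration is Hausdorff:
    (hHausdorff : ∀ k : ℤ, (⨅ i : ℕ, LinearMap.range ((j i).f k).hom) = ⊥)
    -- the inclusions split in every degree (as graded modules `F_iV ≅ F_{i+1}V ⊕ Gr_iV`):
    (hsplit : ∀ (i : ℕ) (k : ℤ), ∃ r : (F i).X k ⟶ (F (i + 1)).X k, (ι i).f k ≫ r = 𝟙 ((F (i + 1)).X k))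
    -- the graded pieces `Gr_iV = F_iV / F_{i+1}V` are K-injective:
    (hGr : ∀ i : ℕ, KInjective (cokernel (ι i)))
    -- in each degree `k`, only finitely many graded pieces are nonzero:
    (hfin : ∀ k : ℤ, {i : ℕ | ¬ IsZero ((cokernel (ι i)).X k)}.Finite) :
    KInjective V :=
  K_injective_of_filtration_general V F ι j hcomm htop hHausdorff hsplit hGr hfin
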